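/- (Divergence theorem for tangential vector fields on the unit sphere.) Let X : ℝ³ → ℝ³ be a smooth vector field that is tangent to the unit sphere, i.e. ⟨X(ω), ω⟩ = 0 for every ω with |ω| = 1. Then ∫_{S²} [ div X(ω) − Σ_{i,j} ω_i ω_j ∂_j X_i(ω) ] dσ(ω) = 0, where div X = Σ_i ∂_i X_i. Equivalently, the integral over S² of the tangential divergence of X vanishes. -/

import Mathlib

open MeasureTheory Metric Real
open scoped RealInnerProductSpace

noncomputable section

abbrev E3 := EuclideanSpace ℝ (Fin 3)

/-- The surface measure on the unit sphere `S² ⊆ ℝ³` (total mass `4π`). -/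
def sphMeasure : Measure (sphere (0 : E3) 1) := (volume : Measure E3).toSphere

/-- Partial derivative `∂_j X_i` of a vector field `X : ℝ³ → ℝ³`. -/
def pd (X : E3 → E3) (i j : Fin 3) (x : E3) : ℝ :=
  fderiv ℝ (fun y => X y i) x (EuclideanSpace.single j (1:ℝ))

namespace SphDivAux

def bump : ContDiffBump (1:ℝ) := ⟨1/2, 3/4, by norm_num, by norm_num⟩

lemma bump_eq_zero {r : ℝ} (h : 3/4 ≤ |r - 1|) : bump r = 0 :=
  bump.zero_of_le_dist (by simp only [Real.dist_eq, bump]; linarith)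

lemma bump_eq_one {r : ℝ} (h : |r - 1| ≤ 1/2) : bump r = 1 :=
  bump.one_of_mem_closedBall (by simp only [Metric.mem_closedBall, Real.dist_eq, bump]; linarith)

variable (X : E3 → E3)

def FF (x : E3) : ℝ :=
  (∑ i : Fin 3, pd X i i x) - ∑ i : Fin 3, ∑ j : Fin 3, x i * x j * pd X i j x

def ZZ (x : E3) : E3 := bump ‖x‖ • X (‖x‖⁻¹ • x)

def gg (x : E3) : ℝ := (bump ‖x‖ * ‖x‖⁻¹) * FF X (‖x‖⁻¹ • x)

lemma hasFDerivAt_norm' {x : E3} (hx : x ≠ 0) :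
    HasFDerivAt (fun y : E3 => ‖y‖) (‖x‖⁻¹ • (innerSL ℝ x : E3 →L[ℝ] ℝ)) x := by
  have h1 : HasFDerivAt (fun y : E3 => ‖y‖ ^ 2)
      (2 • ((innerSL ℝ x : E3 →L[ℝ] ℝ).comp (ContinuousLinearMap.id ℝ E3))) x := by
    simpa using (hasFDerivAt_id x).norm_sq
  have hne : (‖x‖ ^ 2 : ℝ) ≠ 0 := pow_ne_zero _ (norm_ne_zero_iff.2 hx)
  have h2 := (Real.hasDerivAt_sqrt hne).comp_hasFDerivAt x h1
  have hfun : (Real.sqrt ∘ fun y : E3 => ‖y‖ ^ 2) = fun y : E3 => ‖y‖ := by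
    funext y; simp [Function.comp, Real.sqrt_sq (norm_nonneg y)]
  rw [hfun] at h2
  refine h2.congr_fderiv ?_
  rw [Real.sqrt_sq (norm_nonneg x)]
  ext v
  simp only [ContinuousLinearMap.smul_apply, ContinuousLinearMap.coe_smul',
    Pi.smul_apply, ContinuousLinearMap.coe_comp', Function.comp_apply,
    ContinuousLinearMap.coe_id', id_eq]
  have hn : ‖x‖ ≠ 0 := norm_ne_zero_iff.2 hx
  field_simp
  ring

lemma pd_eq (hX : ContDiff ℝ (⊤ : ℕ∞) X) (i j : Fin 3) (x : E3) :
    pd X i j x = fderiv ℝ X x (EuclideanSpace.single j (1:ℝ)) i := by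
  have hd : HasFDerivAt X (fderiv ℝ X x) x := (hX.differentiable (by simp) x).hasFDerivAt
  have h2 : HasFDerivAt (fun y => X y i)
      ((EuclideanSpace.proj i : E3 →L[ℝ] ℝ).comp (fderiv ℝ X x)) x := by
    have := ((EuclideanSpace.proj (𝕜 := ℝ) i).hasFDerivAt (x := X x)).comp x hd
    exact this
  rw [pd, h2.fderiv]; rfl

lemma apply_eq_sum (A : E3 →L[ℝ] E3) (x : E3) (i : Fin 3) :
    A x i = ∑ k : Fin 3, x k * A (EuclideanSpace.single k (1:ℝ)) i := by
  have hx : x = ∑ k : Fin 3, x k • EuclideanSpace.single k (1:ℝ) := by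
    ext j
    rw [show ((∑ k : Fin 3, x k • EuclideanSpace.single k (1:ℝ)) j)
        = ∑ k : Fin 3, (x k • EuclideanSpace.single k (1:ℝ)) j from by
      simp only [WithLp.ofLp_sum, Finset.sum_apply]]
    simp [EuclideanSpace.single_apply]
  calc A x i = ((EuclideanSpace.proj i : E3 →L[ℝ] ℝ).comp A) x := rfl
    _ = ∑ k : Fin 3, x k * A (EuclideanSpace.single k (1:ℝ)) i := by
        conv_lhs => rw [hx]
        rw [map_sum]
        refine Finset.sum_congr rfl fun k _ => ?_
        rw [_root_.map_smul]; rfl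

lemma hasFDerivAt_ZZ (hX : ContDiff ℝ (⊤ : ℕ∞) X) {x : E3} (hx : x ≠ 0) :
    HasFDerivAt (ZZ X)
      (bump ‖x‖ • ((fderiv ℝ X (‖x‖⁻¹ • x)).comp
          ((‖x‖⁻¹ • ContinuousLinearMap.id ℝ E3) +
            (-(‖x‖ ^ 2)⁻¹ • (‖x‖⁻¹ • (innerSL ℝ x : E3 →L[ℝ] ℝ))).smulRight x))
        + ((deriv (bump : ℝ → ℝ) ‖x‖) • (‖x‖⁻¹ • (innerSL ℝ x : E3 →L[ℝ] ℝ))).smulRight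
            (X (‖x‖⁻¹ • x))) x := by
  have hN := hasFDerivAt_norm' hx
  have hrne : ‖x‖ ≠ 0 := norm_ne_zero_iff.2 hx
  have hinv : HasFDerivAt (fun y : E3 => ‖y‖⁻¹)
      (-(‖x‖ ^ 2)⁻¹ • (‖x‖⁻¹ • (innerSL ℝ x : E3 →L[ℝ] ℝ))) x :=
    (hasDerivAt_inv hrne).comp_hasFDerivAt x hN
  have hu : HasFDerivAt (fun y : E3 => ‖y‖⁻¹ • y)
      ((‖x‖⁻¹ • ContinuousLinearMap.id ℝ E3) +
        (-(‖x‖ ^ 2)⁻¹ • (‖x‖⁻¹ • (innerSL ℝ x : E3 →L[ℝ] ℝ))).smulRight x) x :=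
    hinv.smul (hasFDerivAt_id x)
  have hXd : HasFDerivAt X (fderiv ℝ X (‖x‖⁻¹ • x)) (‖x‖⁻¹ • x) :=
    (hX.differentiable (by simp) _).hasFDerivAt
  have hcomp : HasFDerivAt (fun y : E3 => X (‖y‖⁻¹ • y))
      ((fderiv ℝ X (‖x‖⁻¹ • x)).comp
        ((‖x‖⁻¹ • ContinuousLinearMap.id ℝ E3) +
          (-(‖x‖ ^ 2)⁻¹ • (‖x‖⁻¹ • (innerSL ℝ x : E3 →L[ℝ] ℝ))).smulRight x)) x :=
    hXd.comp (f := fun y : E3 => ‖y‖⁻¹ • y) x hu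
  have hb : HasDerivAt (bump : ℝ → ℝ) (deriv (bump : ℝ → ℝ) ‖x‖) ‖x‖ :=
    (((bump.contDiff (n := 1)).differentiable (by simp)) ‖x‖).hasDerivAt
  have hH := hb.comp_hasFDerivAt x hN
  exact hH.smul hcomp

lemma gg_zero_of_small {x : E3} (hx : ‖x‖ ≤ 1/4) : gg X x = 0 := by
  have : bump ‖x‖ = 0 := bump_eq_zero (by rw [abs_sub_comm, abs_of_nonneg (by linarith)]; linarith)
  simp [gg, this]

lemma ZZ_zero_of_small {x : E3} (hx : ‖x‖ ≤ 1/4) : ZZ X x = 0 := by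
  have : bump ‖x‖ = 0 := bump_eq_zero (by rw [abs_sub_comm, abs_of_nonneg (by linarith)]; linarith)
  simp [ZZ, this]

lemma ZZ_zero_of_big {x : E3} (hx : 2 ≤ ‖x‖) : ZZ X x = 0 := by
  have : bump ‖x‖ = 0 := bump_eq_zero (by rw [abs_of_nonneg (by linarith)]; linarith)
  simp [ZZ, this]

lemma gg_zero_of_big {x : E3} (hx : 2 ≤ ‖x‖) : gg X x = 0 := by
  have : bump ‖x‖ = 0 := bump_eq_zero (by rw [abs_of_nonneg (by linarith)]; linarith)
  simp [gg, this]

lemma sum_fderiv_ZZ (hX : ContDiff ℝ (⊤ : ℕ∞) X)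
    (htan : ∀ ω : E3, ‖ω‖ = 1 → ⟪X ω, ω⟫ = 0) (x : E3) :
    ∑ i : Fin 3, fderiv ℝ (ZZ X) x (EuclideanSpace.single i (1:ℝ)) i = gg X x := by
  by_cases hx : ‖x‖ < 1/4
  · have hev : ZZ X =ᶠ[nhds x] (fun _ => (0:E3)) := by
      filter_upwards [IsOpen.mem_nhds (isOpen_lt continuous_norm continuous_const)
        (by simpa using hx : x ∈ {y : E3 | ‖y‖ < 1/4})] with y hy
      exact ZZ_zero_of_small X (le_of_lt hy)
    rw [hev.fderiv_eq, fderiv_fun_const]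
    simp [gg_zero_of_small X (le_of_lt hx)]
  · push_neg at hx
    have hx0 : x ≠ 0 := by
      intro h; rw [h, norm_zero] at hx; norm_num at hx
    have hrne : ‖x‖ ≠ 0 := norm_ne_zero_iff.2 hx0
    set r : ℝ := ‖x‖ with hr
    set u : E3 := r⁻¹ • x with hudef
    have hu1 : ‖u‖ = 1 := by
      rw [hudef, norm_smul, norm_inv, norm_norm, ← hr, inv_mul_cancel₀ hrne]
    set A : E3 →L[ℝ] E3 := fderiv ℝ X u with hA
    rw [(hasFDerivAt_ZZ X hX hx0).fderiv]
    -- tangency: ∑ k, X u k * x k = 0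
    have htan' : ∑ k : Fin 3, X u k * x k = 0 := by
      have h0 : ⟪X u, u⟫ = 0 := htan u hu1
      rw [PiLp.inner_apply] at h0
      simp only [RCLike.inner_apply, conj_trivial] at h0
      have : ∑ k : Fin 3, X u k * (r⁻¹ * x k) = 0 := by
        simp [hudef, PiLp.smul_apply, smul_eq_mul] at h0
        rw [← h0]; exact Finset.sum_congr rfl fun k _ => mul_comm _ _
      have h2 : r * ∑ k : Fin 3, X u k * (r⁻¹ * x k) = 0 := by rw [this, mul_zero]
      rw [Finset.mul_sum] at h2
      calc ∑ k : Fin 3, X u k * x k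
          = ∑ k : Fin 3, r * (X u k * (r⁻¹ * x k)) := by
            refine Finset.sum_congr rfl fun k _ => ?_
            field_simp
        _ = 0 := h2
    -- coordinates of u
    have hui : ∀ i, u i = r⁻¹ * x i := fun i => rfl
    -- expand LHS
    have hterm : ∀ i : Fin 3,
        (bump r • (A.comp ((r⁻¹ • ContinuousLinearMap.id ℝ E3) +
            (-(r ^ 2)⁻¹ • (r⁻¹ • (innerSL ℝ x : E3 →L[ℝ] ℝ))).smulRight x))
          + ((deriv (bump : ℝ → ℝ) r) • (r⁻¹ • (innerSL ℝ x : E3 →L[ℝ] ℝ))).smulRight (X u))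
          (EuclideanSpace.single i (1:ℝ)) i
        = bump r * (r⁻¹ * pd X i i u
            - (r ^ 2)⁻¹ * r⁻¹ * x i * ∑ k : Fin 3, x k * pd X i k u)
          + deriv (bump : ℝ → ℝ) r * r⁻¹ * (x i * X u i) := by
      intro i
      have hinner : ⟪x, EuclideanSpace.single i (1:ℝ)⟫ = x i := by
        simp [EuclideanSpace.inner_single_right]
      simp only [ContinuousLinearMap.add_apply, ContinuousLinearMap.coe_smul',
        Pi.smul_apply, ContinuousLinearMap.smulRight_apply, ContinuousLinearMap.comp_apply,
        ContinuousLinearMap.id_apply, innerSL_apply_apply]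
      rw [hinner, map_add, A.map_smul, A.map_smul]
      simp only [PiLp.add_apply, PiLp.smul_apply, smul_eq_mul]
      rw [apply_eq_sum A x i]
      simp only [hA, ← pd_eq X hX]
      ring
    rw [Finset.sum_congr rfl (fun i _ => hterm i)]
    have h1 : ∑ i : Fin 3, deriv (bump : ℝ → ℝ) r * r⁻¹ * (x i * X u i) = 0 := by
      rw [← Finset.mul_sum]
      have h2 : ∑ i : Fin 3, x i * X u i = 0 := by
        rw [← htan']; exact Finset.sum_congr rfl fun i _ => mul_comm _ _
      rw [h2, mul_zero]
    rw [Finset.sum_add_distrib, h1, add_zero]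
    show _ = (bump r * r⁻¹) * FF X u
    rw [FF]
    have hr2 : ((r:ℝ) ^ 2)⁻¹ = r⁻¹ * r⁻¹ := by rw [sq, mul_inv]
    rw [mul_sub, Finset.mul_sum, Finset.mul_sum]
    rw [show (∑ i : Fin 3, bump r * (r⁻¹ * pd X i i u
        - (r ^ 2)⁻¹ * r⁻¹ * x i * ∑ k : Fin 3, x k * pd X i k u))
      = ∑ i : Fin 3, (bump r * r⁻¹ * pd X i i u
        - bump r * r⁻¹ * ∑ j : Fin 3, u i * u j * pd X i j u) from
      Finset.sum_congr rfl fun i _ => by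
        rw [mul_sub]
        congr 1
        · ring
        · simp only [Finset.mul_sum]
          exact Finset.sum_congr rfl fun k _ => by rw [hui i, hui k, hr2]; ring]
    rw [Finset.sum_sub_distrib]

lemma diff_ZZ (hX : ContDiff ℝ (⊤ : ℕ∞) X) : Differentiable ℝ (ZZ X) := by
  intro x
  by_cases hx : ‖x‖ < 1/4
  · have hev : ZZ X =ᶠ[nhds x] fun _ => (0:E3) := by
      filter_upwards [IsOpen.mem_nhds (isOpen_lt continuous_norm continuous_const)
        (by simpa using hx : x ∈ {y : E3 | ‖y‖ < 1/4})] with y hy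
      exact ZZ_zero_of_small X (le_of_lt hy)
    exact (differentiableAt_const (0:E3)).congr_of_eventuallyEq hev
  · push_neg at hx
    have hx0 : x ≠ 0 := by
      intro h; rw [h, norm_zero] at hx; norm_num at hx
    exact (hasFDerivAt_ZZ X hX hx0).differentiableAt

lemma continuous_FF (hX : ContDiff ℝ (⊤ : ℕ∞) X) : Continuous (FF X) := by
  have hpd : ∀ i j : Fin 3, Continuous (pd X i j) := by
    intro i j
    have h1 : Continuous (fun x => fderiv ℝ X x) := hX.continuous_fderiv (by simp)
    have h2 : Continuous fun x => fderiv ℝ X x (EuclideanSpace.single j (1:ℝ)) :=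
      h1.clm_apply continuous_const
    have h3 : pd X i j = fun x => (EuclideanSpace.proj (𝕜 := ℝ) i)
        (fderiv ℝ X x (EuclideanSpace.single j (1:ℝ))) := funext (pd_eq X hX i j)
    rw [h3]
    exact (EuclideanSpace.proj (𝕜 := ℝ) i).continuous.comp h2
  have hcoord : ∀ i : Fin 3, Continuous (fun x : E3 => x i) :=
    fun i => (EuclideanSpace.proj (𝕜 := ℝ) i).continuous
  refine Continuous.sub (continuous_finset_sum _ fun i _ => hpd i i) ?_
  exact continuous_finset_sum _ fun i _ => continuous_finset_sum _ fun j _ =>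
    (((hcoord i).mul (hcoord j)).mul (hpd i j))

lemma continuous_gg (hX : ContDiff ℝ (⊤ : ℕ∞) X) : Continuous (gg X) := by
  rw [continuous_iff_continuousAt]
  intro x
  by_cases hx : ‖x‖ < 1/4
  · have hev : gg X =ᶠ[nhds x] fun _ => (0:ℝ) := by
      filter_upwards [IsOpen.mem_nhds (isOpen_lt continuous_norm continuous_const)
        (by simpa using hx : x ∈ {y : E3 | ‖y‖ < 1/4})] with y hy
      exact gg_zero_of_small X (le_of_lt hy)
    exact continuousAt_const.congr hev.symm
  · push_neg at hx
    have hx0 : x ≠ 0 := by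
      intro h; rw [h, norm_zero] at hx; norm_num at hx
    have hrne : ‖x‖ ≠ 0 := norm_ne_zero_iff.2 hx0
    have hinv : ContinuousAt (fun y : E3 => ‖y‖⁻¹) x :=
      continuous_norm.continuousAt.inv₀ hrne
    refine ContinuousAt.mul (ContinuousAt.mul ?_ hinv) ?_
    · exact bump.continuous.continuousAt.comp continuous_norm.continuousAt
    · exact ((continuous_FF X hX).continuousAt).comp (hinv.smul continuousAt_id)

lemma abs_coord_le_norm (y : E3) (i : Fin 3) : |y i| ≤ ‖y‖ := by
  have h := abs_real_inner_le_norm (EuclideanSpace.single i (1:ℝ)) y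
  rw [EuclideanSpace.inner_single_left] at h
  simpa [EuclideanSpace.norm_single] using h

lemma integral_gg_eq_zero (hX : ContDiff ℝ (⊤ : ℕ∞) X)
    (htan : ∀ ω : E3, ‖ω‖ = 1 → ⟪X ω, ω⟫ = 0) : ∫ x : E3, gg X x = 0 := by
  classical
  set L : E3 ≃L[ℝ] (Fin 3 → ℝ) := EuclideanSpace.equiv (Fin 3) ℝ with hL
  set a : Fin 3 → ℝ := fun _ => -3 with ha
  set b : Fin 3 → ℝ := fun _ => 3 with hb
  set f : (Fin 3 → ℝ) → (Fin 3 → ℝ) := fun p => L (ZZ X (L.symm p)) with hf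
  set f' : (Fin 3 → ℝ) → (Fin 3 → ℝ) →L[ℝ] (Fin 3 → ℝ) := fun p =>
    ((L : E3 →L[ℝ] (Fin 3 → ℝ)).comp (fderiv ℝ (ZZ X) (L.symm p))).comp
      (L.symm : (Fin 3 → ℝ) →L[ℝ] E3) with hf'
  have hder : ∀ p, HasFDerivAt f (f' p) p := by
    intro p
    have h1 : HasFDerivAt (fun q : Fin 3 → ℝ => ZZ X (L.symm q))
        ((fderiv ℝ (ZZ X) (L.symm p)).comp (L.symm : (Fin 3 → ℝ) →L[ℝ] E3)) p :=
      ((diff_ZZ X hX (L.symm p)).hasFDerivAt).comp (f := fun q : Fin 3 → ℝ => L.symm q) p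
        (L.symm : (Fin 3 → ℝ) →L[ℝ] E3).hasFDerivAt
    exact ((L : E3 →L[ℝ] (Fin 3 → ℝ)).hasFDerivAt).comp
      (f := fun q : Fin 3 → ℝ => ZZ X (L.symm q)) p h1
  have divsum : ∀ p : Fin 3 → ℝ,
      (∑ i : Fin 3, f' p (Pi.single i (1:ℝ)) i) = gg X (L.symm p) := by
    intro p
    have : ∀ i : Fin 3, f' p (Pi.single i (1:ℝ)) i
        = fderiv ℝ (ZZ X) (L.symm p) (EuclideanSpace.single i (1:ℝ)) i := fun i => rfl
    rw [Finset.sum_congr rfl fun i _ => this i]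
    exact sum_fderiv_ZZ X hX htan (L.symm p)
  have hZcont : Continuous (ZZ X) := (diff_ZZ X hX).continuous
  have key := MeasureTheory.integral_divergence_of_hasFDerivAt_off_countable
    (n := 2) a b (fun i => by show (-3:ℝ) ≤ 3; norm_num) f f' ∅ Set.countable_empty
    ((L.continuous.comp (hZcont.comp L.symm.continuous)).continuousOn)
    (fun x _ => hder x) ?_
  · -- faces vanish
    have hface : ∀ (i : Fin 3) (c : ℝ), |c| = 3 → ∀ (y : Fin 2 → ℝ),
        f (i.insertNth c y) = 0 := by
      intro i c hc y
      have h1 : |(i.insertNth c y : Fin 3 → ℝ) i| = 3 := by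
        rw [Fin.insertNth_apply_same]; exact hc
      have h2 : (2:ℝ) ≤ ‖L.symm (i.insertNth c y)‖ := by
        have := abs_coord_le_norm (L.symm (i.insertNth c y)) i
        have h3 : (L.symm (i.insertNth c y) : E3) i = (i.insertNth c y : Fin 3 → ℝ) i := rfl
        rw [h3, h1] at this; linarith
      have h4 : ZZ X (L.symm (i.insertNth c y)) = 0 := ZZ_zero_of_big X h2
      show L (ZZ X (L.symm (i.insertNth c y))) = 0
      rw [h4]; exact map_zero L
    have hfaces : ∀ i : Fin 3,
        ((∫ x in Set.Icc (a ∘ i.succAbove) (b ∘ i.succAbove),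
            f (i.insertNth (b i) x) i) -
          ∫ x in Set.Icc (a ∘ i.succAbove) (b ∘ i.succAbove),
            f (i.insertNth (a i) x) i) = 0 := by
      intro i
      have e1 : ∀ x : Fin 2 → ℝ, f (i.insertNth (b i) x) i = 0 := by
        intro x; rw [hface i (b i) (by norm_num [hb]) x]; rfl
      have e2 : ∀ x : Fin 2 → ℝ, f (i.insertNth (a i) x) i = 0 := by
        intro x; rw [hface i (a i) (by norm_num [ha]) x]; rfl
      simp [e1, e2]
    rw [Finset.sum_congr rfl fun i _ => hfaces i, Finset.sum_const, smul_zero] at key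
    -- now key : ∫ x in Icc a b, ∑ i, f' x (Pi.single i 1) i = 0
    have hIcc : ∫ x in Set.Icc a b, (∑ i : Fin 3, f' x (Pi.single i (1:ℝ)) i)
        = ∫ x in Set.Icc a b, gg X (L.symm x) :=
      setIntegral_congr_fun measurableSet_Icc fun x _ => divsum x
    have hout : ∀ x : Fin 3 → ℝ, x ∉ Set.Icc a b → gg X (L.symm x) = 0 := by
      intro x hx
      rw [Set.mem_Icc] at hx
      push_neg at hx
      rcases Classical.em (a ≤ x) with h | h
      · have hxb := hx h
        rw [Pi.le_def] at hxb
        obtain ⟨i, hi⟩ := not_forall.1 hxb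
        push_neg at hi
        have : (2:ℝ) ≤ ‖L.symm x‖ := by
          have h5 := abs_coord_le_norm (L.symm x) i
          have h6 : (L.symm x : E3) i = x i := rfl
          rw [h6] at h5
          have : (3:ℝ) < x i := by simpa [hb] using hi
          have : (3:ℝ) < |x i| := lt_of_lt_of_le this (le_abs_self _)
          linarith
        exact gg_zero_of_big X this
      · rw [Pi.le_def] at h
        obtain ⟨i, hi⟩ := not_forall.1 h
        push_neg at hi
        have : (2:ℝ) ≤ ‖L.symm x‖ := by
          have h5 := abs_coord_le_norm (L.symm x) i
          have h6 : (L.symm x : E3) i = x i := rfl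
          rw [h6] at h5
          have h7 : x i < -3 := by simpa [ha] using hi
          have : (3:ℝ) < |x i| := by
            rw [lt_abs]; right; linarith
          linarith
        exact gg_zero_of_big X this
    rw [hIcc, setIntegral_eq_integral_of_forall_compl_eq_zero hout] at key
    -- transfer to E3
    have htrans : ∫ x : Fin 3 → ℝ, gg X (L.symm x) = ∫ y : E3, gg X y := by
      rw [← (EuclideanSpace.volume_preserving_symm_measurableEquiv_toLp (Fin 3)).integral_comp
        (MeasurableEquiv.toLp 2 (Fin 3 → ℝ)).symm.measurableEmbedding
        (fun p => gg X (L.symm p))]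
      exact integral_congr_ae (Filter.Eventually.of_forall fun x => rfl)
    rw [htrans] at key
    exact key
  · -- integrability
    have heq : (fun x : Fin 3 → ℝ => ∑ i : Fin 3, f' x (Pi.single i (1:ℝ)) i)
        = fun x => gg X (L.symm x) := funext divsum
    rw [heq]
    exact (((continuous_gg X hX).comp L.symm.continuous).continuousOn).integrableOn_compact
      isCompact_Icc

lemma integral_gg_polar :
    ∫ x : E3, gg X x =
      (∫ ω : sphere (0:E3) 1, FF X (ω : E3) ∂((volume : Measure E3).toSphere))
        * ∫ r in Set.Ioi (0:ℝ), r * bump r := by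
  have h1 : ∫ x : ({(0:E3)}ᶜ : Set E3), gg X x.1
        ∂(Measure.comap Subtype.val (volume : Measure E3))
      = ∫ x : E3, gg X x := by
    rw [integral_subtype_comap (measurableSet_singleton (0:E3)).compl (fun x => gg X x),
      MeasureTheory.restrict_compl_singleton]
  have h2 := ((volume : Measure E3).measurePreserving_homeomorphUnitSphereProd).integral_comp
    (Homeomorph.measurableEmbedding _)
    (fun p : sphere (0:E3) 1 × Set.Ioi (0:ℝ) => FF X (p.1 : E3) * (bump p.2 * (p.2 : ℝ)⁻¹))
  have h3 : ∀ x : ({(0:E3)}ᶜ : Set E3),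
      (fun p : sphere (0:E3) 1 × Set.Ioi (0:ℝ) =>
        FF X (p.1 : E3) * (bump p.2 * (p.2 : ℝ)⁻¹)) ((homeomorphUnitSphereProd E3) x)
      = gg X x.1 := by
    intro x
    simp only [homeomorphUnitSphereProd_apply_fst_coe, homeomorphUnitSphereProd_apply_snd_coe]
    rw [gg]; ring
  have h4 : ∫ x : E3, gg X x
      = ∫ p : sphere (0:E3) 1 × Set.Ioi (0:ℝ),
          FF X (p.1 : E3) * (bump p.2 * (p.2 : ℝ)⁻¹)
          ∂(((volume : Measure E3).toSphere).prod
            (Measure.volumeIoiPow (Module.finrank ℝ E3 - 1))) := by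
    rw [← h1, ← h2]
    exact integral_congr_ae (Filter.Eventually.of_forall fun x => (h3 x).symm)
  rw [h4, integral_prod_mul (fun ω : sphere (0:E3) 1 => FF X (ω : E3))
    (fun r : Set.Ioi (0:ℝ) => bump r * (r : ℝ)⁻¹)]
  congr 1
  -- radial integral
  have hd : Module.finrank ℝ E3 - 1 = 2 := by
    simp [finrank_euclideanSpace_fin]
  rw [hd]
  simp only [Measure.volumeIoiPow, ENNReal.ofReal]
  rw [integral_withDensity_eq_integral_smul
    ((measurable_subtype_coe.pow_const _).real_toNNReal)
    (fun r : Set.Ioi (0:ℝ) => bump r * (r : ℝ)⁻¹)]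
  rw [integral_subtype_comap measurableSet_Ioi
    (fun a : ℝ => Real.toNNReal (a ^ 2) • (bump a * a⁻¹))]
  refine setIntegral_congr_fun measurableSet_Ioi fun r hr => ?_
  have hr0 : (0:ℝ) < r := hr
  rw [NNReal.smul_def, Real.coe_toNNReal _ (by positivity)]
  field_simp
  rw [smul_eq_mul, mul_div_assoc', div_eq_iff hr0.ne']
  ring

lemma radial_pos : 0 < ∫ r in Set.Ioi (0:ℝ), r * bump r := by
  have hcont : Continuous fun r : ℝ => r * bump r := continuous_id.mul bump.continuous
  have hcs : HasCompactSupport fun r : ℝ => r * bump r := bump.hasCompactSupport.mul_left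
  have hint : IntegrableOn (fun r : ℝ => r * bump r) (Set.Ioi 0) :=
    (hcont.integrable_of_hasCompactSupport hcs).integrableOn
  have h1 : ∫ r in Set.Icc (1/2:ℝ) (3/2), r * bump r = 1 := by
    have heq : ∀ r ∈ Set.Icc (1/2:ℝ) (3/2), r * bump r = r := by
      intro r hr
      rw [bump_eq_one (by rw [abs_le]; constructor <;> [linarith [hr.1]; linarith [hr.2]]),
        mul_one]
    rw [setIntegral_congr_fun measurableSet_Icc heq,
      MeasureTheory.integral_Icc_eq_integral_Ioc,
      ← intervalIntegral.integral_of_le (by norm_num : (1/2:ℝ) ≤ 3/2)]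
    open intervalIntegral in rw [integral_id]
    norm_num
  have h2 : ∫ r in Set.Icc (1/2:ℝ) (3/2), r * bump r ≤ ∫ r in Set.Ioi (0:ℝ), r * bump r := by
    refine setIntegral_mono_set hint ?_ ?_
    · filter_upwards [ae_restrict_mem measurableSet_Ioi] with r hr
      exact mul_nonneg (le_of_lt hr) bump.nonneg
    · exact HasSubset.Subset.eventuallyLE fun r hr =>
        lt_of_lt_of_le (by norm_num) hr.1
  linarith

end SphDivAux

/-- **Divergence theorem for tangential vector fields on the unit sphere**: if the smooth
vector field `X` is tangent to `S²`, then the integral over `S²` of its tangential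
divergence `div X − Σ_{i,j} ω_iω_j ∂_jX_i` vanishes. -/
theorem sphere_tangential_divergence_theorem
    (X : E3 → E3) (hX : ContDiff ℝ (⊤ : ℕ∞) X)
    (htan : ∀ ω : E3, ‖ω‖ = 1 → ⟪X ω, ω⟫ = 0) :
    (∫ ω : sphere (0 : E3) 1,
        ((∑ i : Fin 3, pd X i i (ω : E3))
          - ∑ i : Fin 3, ∑ j : Fin 3,
              (ω : E3) i * (ω : E3) j * pd X i j (ω : E3)) ∂sphMeasure) = 0 := by
  have h0 := SphDivAux.integral_gg_eq_zero X hX htan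
  rw [SphDivAux.integral_gg_polar X] at h0
  have hc := SphDivAux.radial_pos
  have hS : (∫ ω : sphere (0:E3) 1, SphDivAux.FF X (ω : E3)
      ∂((volume : Measure E3).toSphere)) = 0 := by
    rcases mul_eq_zero.1 h0 with h | h
    · exact h
    · exact absurd h (ne_of_gt hc)
  exact hS

end
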